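/- Let (x₁, x₂, x₃, x₄) be a nonzero element of ker(Φ₄). Then the subspace of V(4) spanned by x₁, x₂, x₃, x₄ has dimension exactly 3. -/

import Mathlib

open Submodule

/-- Index type for the distinguished basis of `V(n)`: pairs `(j,i)` with `i < j`. -/
abbrev VIdx (n : ℕ) := {q : Fin n × Fin n // q.2 < q.1}

/-- Index type for the distinguished basis of `W(n)`: triples `(j,i,k)` with `i < j`, `i ≤ k`. -/
abbrev WIdx (n : ℕ) := {t : Fin n × Fin n × Fin n // t.2.1 < t.1 ∧ t.2.1 ≤ t.2.2}

/-- The vector space `V(n)` over `F`. -/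
abbrev V (F : Type*) [Field F] (n : ℕ) := VIdx n → F

/-- The vector space `W(n)` over `F`. -/
abbrev W (F : Type*) [Field F] (n : ℕ) := WIdx n → F

variable (F : Type*) [Field F] (n : ℕ)

/-- The vector `v[j,i]`, with the conventions `v[i,j] = -v[j,i]` and `v[i,i] = 0`. -/
noncomputable def v (j i : Fin n) : V F n :=
  if h : i < j then Pi.single (⟨(j, i), h⟩ : VIdx n) 1
  else if h' : j < i then -Pi.single (⟨(i, j), h'⟩ : VIdx n) 1
  else 0

/-- The vector `w[j,i,k]` (the basis vector when `i < j` and `i ≤ k`, zero otherwise). -/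
noncomputable def w (j i k : Fin n) : W F n :=
  if h : i < j ∧ i ≤ k then Pi.single (⟨(j, i, k), h⟩ : WIdx n) 1 else 0

/-- The linear map `φ_k : V(n) → W(n)` determined on basis vectors by
`φ_k(v[j,i]) = w[j,i,k]` if `i ≤ k`, and `φ_k(v[j,i]) = w[j,k,i] - w[i,k,j]` if `k < i`. -/
noncomputable def phi (k : Fin n) : V F n →ₗ[F] W F n :=
  (Pi.basisFun F (VIdx n)).constr F fun q =>
    if q.1.2 ≤ k then w F n q.1.1 q.1.2 k
    else w F n q.1.1 k q.1.2 - w F n q.1.2 k q.1.1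

/-- The linear map `Φ_n : V(n)ⁿ → W(n)`, `Φ_n(x₁,…,x_n) = φ₁(x₁) + ⋯ + φ_n(x_n)`. -/
noncomputable def Phi : (Fin n → V F n) →ₗ[F] W F n :=
  ∑ k : Fin n, (phi F n k).comp (LinearMap.proj k)

/-- For `X ≤ V(n)`, the subspace `X* ≤ W(n)`: the span of `φ₁(X) ∪ ⋯ ∪ φ_n(X)`. -/
noncomputable def starV (X : Submodule F (V F n)) : Submodule F (W F n) :=
  ⨆ k : Fin n, X.map (phi F n k)

/-- For `Y ≤ W(n)`, the subspace `Y* ≤ V(n)`: the intersection `⋂ₖ φ_k⁻¹(Y)`. -/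
noncomputable def starW (Y : Submodule F (W F n)) : Submodule F (V F n) :=
  ⨅ k : Fin n, Y.comap (phi F n k)

/-!
For `x ∈ ker Φ₄` put `ω(k, j, i) = ⟨x_k, v[j,i]⟩`. The coordinates of `Φ₄ x` say exactly that `ω`
vanishes when `k ∈ {i, j}` and is antisymmetric in its first two slots; as it is antisymmetric in
the last two by construction, `ω` is an alternating 3-tensor on `F⁴`. Such a tensor is the Hodge
dual of a vector `c ∈ F⁴`, and then `x_k = ⋆(c ∧ e_k)`. The span of the `x_k` is therefore the
image of `u ↦ ⋆(c ∧ u)`, whose kernel is the line `F c` when `c ≠ 0`; it has dimension `4 - 1 = 3`.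
-/

variable {F : Type*} [Field F] {n : ℕ}

lemma v_self (i : Fin n) : v F n i i = 0 := by
  simp [v]

lemma v_swap (i j : Fin n) : v F n i j = -v F n j i := by
  rcases lt_trichotomy i j with h | rfl | h
  · simp [v, h, h.not_gt]
  · rw [v_self, neg_zero]
  · simp [v, h, h.not_gt]

lemma v_of_lt {i j : Fin n} (h : i < j) : v F n j i = Pi.single ⟨(j, i), h⟩ 1 := dif_pos h

lemma v_apply (j i : Fin n) (q : VIdx n) :
    v F n j i q = (if q.1 = (j, i) then 1 else 0) - if q.1 = (i, j) then 1 else 0 := by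
  obtain ⟨⟨a, b⟩, hab : b < a⟩ := q
  unfold v
  split_ifs <;> simp [Pi.single_apply, Prod.ext_iff] at * <;> omega

lemma dotProduct_v_of_lt (y : V F n) {i j : Fin n} (h : i < j) :
    y ⬝ᵥ v F n j i = y ⟨(j, i), h⟩ := by
  simp [v_of_lt h]

lemma sum_dotProduct_v_smul (y : V F n) :
    ∑ q : VIdx n, (y ⬝ᵥ v F n q.1.1 q.1.2) • v F n q.1.1 q.1.2 = y := by
  conv_rhs => rw [pi_eq_sum_univ' y]
  exact Finset.sum_congr rfl fun q _ => by rw [dotProduct_v_of_lt y q.2, v_of_lt q.2]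

lemma w_apply (j i k : Fin n) (t : WIdx n) :
    w F n j i k t = if t.1 = (j, i, k) then 1 else 0 := by
  by_cases h : i < j ∧ i ≤ k
  · simp [w, h, Pi.single_apply, Subtype.ext_iff]
  · obtain ⟨⟨a, b, c⟩, ht⟩ := t
    simp only [w, h, dite_false, Pi.zero_apply]
    rw [if_neg]
    rintro ⟨⟩
    exact h ht

lemma phi_single_apply (k : Fin n) (q : VIdx n) (j i l : Fin n) (h : i < j ∧ i ≤ l) :
    phi F n k (Pi.single q 1) ⟨(j, i, l), h⟩ =
      (if k = l then v F n j i q else 0) + if k = i ∧ i < l then v F n j l q else 0 := by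
  rw [phi, ← Pi.basisFun_apply, Module.Basis.constr_basis]
  obtain ⟨⟨a, b⟩, hab : b < a⟩ := q
  simp only [ite_apply, Pi.sub_apply, w_apply, v_apply, Prod.mk.injEq]
  split_ifs <;> first | (exfalso; omega) | norm_num

lemma phi_apply_mk (k : Fin n) (y : V F n) (j i l : Fin n) (h : i < j ∧ i ≤ l) :
    phi F n k y ⟨(j, i, l), h⟩ =
      (if k = l then y ⬝ᵥ v F n j i else 0) + if k = i ∧ i < l then y ⬝ᵥ v F n j l else 0 := by
  conv_lhs => rw [pi_eq_sum_univ' y]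
  simp only [map_sum, map_smul, Finset.sum_apply, Pi.smul_apply, smul_eq_mul, phi_single_apply,
    mul_add, mul_ite, mul_zero, Finset.sum_add_distrib, Finset.sum_ite_irrel,
    Finset.sum_const_zero, dotProduct]

lemma Phi_apply_mk (x : Fin n → V F n) (j i l : Fin n) (h : i < j ∧ i ≤ l) :
    Phi F n x ⟨(j, i, l), h⟩ = x l ⬝ᵥ v F n j i + if i < l then x i ⬝ᵥ v F n j l else 0 := by
  simp [Phi, phi_apply_mk, Finset.sum_add_distrib, ite_and]

section

variable {x : Fin n → V F n}

lemma dotProduct_v_eq_of_Phi_eq_zero (hx : Phi F n x = 0) {i j l : Fin n} (h : i < j ∧ i ≤ l) :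
    x l ⬝ᵥ v F n j i = -if i < l then x i ⬝ᵥ v F n j l else 0 := by
  rw [eq_neg_iff_add_eq_zero, ← Phi_apply_mk _ _ _ _ h, hx, Pi.zero_apply]

lemma dotProduct_v_right_eq_zero (hx : Phi F n x = 0) {i j : Fin n} (h : i < j) :
    x i ⬝ᵥ v F n j i = 0 := by
  simpa using dotProduct_v_eq_of_Phi_eq_zero hx ⟨h, le_rfl⟩

lemma dotProduct_v_left_eq_zero (hx : Phi F n x = 0) {i j : Fin n} (h : i < j) :
    x j ⬝ᵥ v F n j i = 0 := by
  simpa [v_self] using dotProduct_v_eq_of_Phi_eq_zero hx ⟨h, h.le⟩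

lemma dotProduct_v_min_eq_neg (hx : Phi F n x = 0) {a b c : Fin n} (hab : a < b) (hbc : b < c) :
    x a ⬝ᵥ v F n c b = -(x b ⬝ᵥ v F n c a) := by
  simp [dotProduct_v_eq_of_Phi_eq_zero hx ⟨hab.trans hbc, hab.le⟩, hab]

lemma dotProduct_v_mid_eq_neg (hx : Phi F n x = 0) {a b c : Fin n} (hab : a < b) (hbc : b < c) :
    x b ⬝ᵥ v F n c a = -(x c ⬝ᵥ v F n b a) := by
  simp [dotProduct_v_eq_of_Phi_eq_zero hx ⟨hab, (hab.trans hbc).le⟩, hab.trans hbc, v_swap b c,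
    dotProduct_v_min_eq_neg hx hab hbc]

end

lemma sum_VIdx_four {M : Type*} [AddCommMonoid M] (f : VIdx 4 → M) :
    ∑ q, f q = f ⟨(1, 0), by decide⟩ + f ⟨(2, 0), by decide⟩ + f ⟨(3, 0), by decide⟩ +
      f ⟨(2, 1), by decide⟩ + f ⟨(3, 1), by decide⟩ + f ⟨(3, 2), by decide⟩ := by
  rw [show (Finset.univ : Finset (VIdx 4)) = {⟨(1, 0), by decide⟩, ⟨(2, 0), by decide⟩,
    ⟨(3, 0), by decide⟩, ⟨(2, 1), by decide⟩, ⟨(3, 1), by decide⟩, ⟨(3, 2), by decide⟩} by decide]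
  simp [add_assoc]

/-- Up to sign, the coefficient of `v[j,i]` in `hodgeWedge c u` is the minor
`c a * u b - c b * u a` on the complementary pair `{a, b}`: this is `u ↦ ⋆(c ∧ u)` under
`v[j,i] ↔ e_j ∧ e_i`. -/
noncomputable def hodgeWedge (c : Fin 4 → F) : (Fin 4 → F) →ₗ[F] V F 4 where
  toFun u := (c 2 * u 3 - c 3 * u 2) • v F 4 1 0 - (c 1 * u 3 - c 3 * u 1) • v F 4 2 0 +
    (c 1 * u 2 - c 2 * u 1) • v F 4 3 0 + (c 0 * u 3 - c 3 * u 0) • v F 4 2 1 -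
    (c 0 * u 2 - c 2 * u 0) • v F 4 3 1 + (c 0 * u 1 - c 1 * u 0) • v F 4 3 2
  map_add' u u' := by simp only [Pi.add_apply]; module
  map_smul' a u := by simp only [Pi.smul_apply, smul_eq_mul, RingHom.id_apply]; module

lemma exists_eq_hodgeWedge_of_Phi_eq_zero {x : Fin 4 → V F 4} (hx : Phi F 4 x = 0) :
    ∃ c, x = fun k => hodgeWedge c (Pi.single k 1) := by
  -- `c l` is `±ω` on the triple of indices other than `l`
  refine ⟨![x 3 ⬝ᵥ v F 4 2 1, -(x 3 ⬝ᵥ v F 4 2 0), x 3 ⬝ᵥ v F 4 1 0, -(x 2 ⬝ᵥ v F 4 1 0)],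
    funext fun k => ?_⟩
  rw [← sum_dotProduct_v_smul (x k), sum_VIdx_four]
  fin_cases k <;> simp [hodgeWedge, dotProduct_v_right_eq_zero hx, dotProduct_v_left_eq_zero hx,
    dotProduct_v_min_eq_neg hx, dotProduct_v_mid_eq_neg hx]
  module

lemma mem_span_singleton_of_mul_eq_mul {ι : Type*} {c u : ι → F} (hc : c ≠ 0)
    (h : ∀ a b, c a * u b = c b * u a) : u ∈ F ∙ c := by
  obtain ⟨a, ha⟩ := Function.ne_iff.mp hc
  refine Submodule.mem_span_singleton.mpr ⟨u a / c a, funext fun b => ?_⟩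
  rw [Pi.smul_apply, smul_eq_mul, div_mul_eq_mul_div, div_eq_iff ha]
  linear_combination -(h a b)

lemma ker_hodgeWedge {c : Fin 4 → F} (hc : c ≠ 0) : LinearMap.ker (hodgeWedge c) = F ∙ c := by
  refine le_antisymm (fun u hu => mem_span_singleton_of_mul_eq_mul hc fun a b => ?_) ?_
  · have h := congrFun (LinearMap.mem_ker.mp hu)
    simp [Subtype.forall, Fin.forall_fin_succ, hodgeWedge, v] at h
    fin_cases a <;> fin_cases b <;> grind
  · rw [Submodule.span_singleton_le_iff_mem, LinearMap.mem_ker]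
    simp [hodgeWedge, mul_comm]

lemma span_range_hodgeWedge_single (c : Fin 4 → F) :
    Submodule.span F (Set.range fun k => hodgeWedge c (Pi.single k 1)) =
      LinearMap.range (hodgeWedge c) := by
  rw [Set.range_comp' (hodgeWedge c) (fun k => Pi.single k 1), Submodule.span_image,
    ← Submodule.map_top]
  congr 1
  rw [← (Pi.basisFun F (Fin 4)).span_eq, ← funext (Pi.basisFun_apply F (Fin 4))]

lemma finrank_range_hodgeWedge {c : Fin 4 → F} (hc : c ≠ 0) :
    Module.finrank F (LinearMap.range (hodgeWedge c)) = 3 := by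
  have := LinearMap.finrank_range_add_finrank_ker (hodgeWedge c)
  rw [ker_hodgeWedge hc, finrank_span_singleton hc, Module.finrank_fin_fun] at this
  omega

theorem finrank_span_range_of_Phi_eq_zero {x : Fin 4 → V F 4} (hx : Phi F 4 x = 0)
    (hx0 : x ≠ 0) : Module.finrank F (Submodule.span F (Set.range x)) = 3 := by
  obtain ⟨c, rfl⟩ := exists_eq_hodgeWedge_of_Phi_eq_zero hx
  have hc : c ≠ 0 := by
    rintro rfl
    exact hx0 (funext fun k => by simp [hodgeWedge])
  rw [span_range_hodgeWedge_single, finrank_range_hodgeWedge hc]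

theorem statement10_general (p : ℕ) [Fact p.Prime]
    (x : Fin 4 → V (ZMod p) 4) (hx : Phi (ZMod p) 4 x = 0) (hx0 : x ≠ 0) :
    Module.finrank (ZMod p) ↥(Submodule.span (ZMod p) (Set.range x)) = 3 :=
  finrank_span_range_of_Phi_eq_zero hx hx0

/-- If `(x₁,x₂,x₃,x₄)` is a nonzero element of `ker(Φ₄)`, then the span of
`x₁,x₂,x₃,x₄` in `V(4)` has dimension exactly `3`. -/
theorem statement10 (p : ℕ) [Fact p.Prime] (hp2 : p ≠ 2)
    (x : Fin 4 → V (ZMod p) 4) (hx : Phi (ZMod p) 4 x = 0) (hx0 : x ≠ 0) :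
    Module.finrank (ZMod p) ↥(Submodule.span (ZMod p) (Set.range x)) = 3 :=
  statement10_general p x hx hx0
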